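/- arXiv:1103.2138 — 2 statements merged into one kernel-verified Lean document; each statement's English description precedes it below -/
import Mathlib

section
/- Let H and K be Hilbert spaces and let T₀ : H → K be a bounded surjective linear map. The restriction of T₀ to the orthogonal complement (ker T₀)ᗮ is a bounded bijection onto K; let Q : K → H denote its (bounded) inverse. If T : H → K is a bounded linear map with ‖Q‖ · ‖T − T₀‖ < 1/2, then the orthogonal projection of H onto ker T₀ restricts to a linear isomorphism from ker T onto ker T₀. -/
/-!
Since `T₀ ∘ Q = 1` and `‖T ∘ Q - 1‖ = ‖(T - T₀) ∘ Q‖ < 1`, the operator `T ∘ Q` is invertible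
(Neumann series). Hence `ker T` and `ker T₀` are both algebraic complements of `range Q`, and
projecting along `range Q` identifies them. As `range Q ⊆ (ker T₀)ᗮ`, this projection agrees on
`ker T` with the orthogonal projection onto `ker T₀`.
-/

open LinearMap in
theorem LinearMap.isCompl_ker_range_of_bijective_comp {R M N : Type*} [Ring R]
    [AddCommGroup M] [Module R M] [AddCommGroup N] [Module R N]
    {f : M →ₗ[R] N} {g : N →ₗ[R] M} (h : Function.Bijective (f ∘ g)) :
    IsCompl (ker f) (range g) := by
  constructor
  · rw [Submodule.disjoint_def]
    rintro _ hx ⟨y, rfl⟩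
    have hy : y = 0 := h.injective (by simpa using hx)
    rw [hy, map_zero]
  · rw [codisjoint_iff, eq_top_iff]
    intro x _
    obtain ⟨y, hy⟩ := h.surjective (f x)
    rw [← sub_add_cancel x (g y)]
    exact Submodule.add_mem_sup (by simpa [sub_eq_zero] using hy.symm) (mem_range_self g y)

theorem Submodule.exists_linearEquiv_sub_mem_of_isCompl {R E : Type*} [Ring R]
    [AddCommGroup E] [Module R E] {p q r : Submodule R E}
    (hp : IsCompl p r) (hq : IsCompl q r) :
    ∃ φ : p ≃ₗ[R] q, ∀ x : p, (x : E) - φ x ∈ r :=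
  ⟨(r.quotientEquivOfIsCompl p hp.symm).symm.trans (r.quotientEquivOfIsCompl q hq.symm),
    fun x => by simpa using sub_projection_mem hq x⟩

theorem ContinuousLinearMap.bijective_comp_of_norm_mul_norm_sub_lt_one {𝕜 E F : Type*}
    [NontriviallyNormedField 𝕜] [NormedAddCommGroup E] [NormedSpace 𝕜 E]
    [NormedAddCommGroup F] [NormedSpace 𝕜 F] [CompleteSpace F]
    {T₀ T : E →L[𝕜] F} {Q : F →L[𝕜] E} (hQ : T₀.comp Q = .id 𝕜 F)
    (h : ‖Q‖ * ‖T - T₀‖ < 1) : Function.Bijective (T.comp Q) := by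
  have hS : ‖(T₀ - T).comp Q‖ < 1 :=
    calc ‖(T₀ - T).comp Q‖ ≤ ‖T₀ - T‖ * ‖Q‖ := opNorm_comp_le _ _
      _ = ‖Q‖ * ‖T - T₀‖ := by rw [norm_sub_rev, mul_comm]
      _ < 1 := h
  have hTQ : T.comp Q = 1 - (T₀ - T).comp Q := by
    rw [sub_comp, hQ, ← one_def, sub_sub_cancel]
  rw [← isUnit_iff_bijective, hTQ]
  exact (Units.oneSub _ hS).isUnit

theorem orthogonalProjection_ker_isomorphism_general
    {H K : Type*}
    [NormedAddCommGroup H] [InnerProductSpace ℝ H]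
    [NormedAddCommGroup K] [InnerProductSpace ℝ K] [CompleteSpace K]
    (T₀ : H →L[ℝ] K)
    (Q : K →L[ℝ] H)
    (hQrange : ∀ y : K, Q y ∈ (LinearMap.ker (T₀ : H →ₗ[ℝ] K))ᗮ)
    (hT₀Q : T₀.comp Q = ContinuousLinearMap.id ℝ K)
    (T : H →L[ℝ] K)
    (h : ‖Q‖ * ‖T - T₀‖ < 1 / 2) :
    ∃ φ : LinearMap.ker (T : H →ₗ[ℝ] K) ≃ₗ[ℝ] LinearMap.ker (T₀ : H →ₗ[ℝ] K),
      ∀ x : LinearMap.ker (T : H →ₗ[ℝ] K), (x : H) - (φ x : H) ∈ (LinearMap.ker (T₀ : H →ₗ[ℝ] K))ᗮ := by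
  have hT₀ : IsCompl (LinearMap.ker (T₀ : H →ₗ[ℝ] K)) (LinearMap.range (Q : K →ₗ[ℝ] H)) :=
    LinearMap.isCompl_ker_range_of_bijective_comp <| by
      change Function.Bijective (T₀.comp Q)
      rw [hT₀Q]
      exact Function.bijective_id
  have hT : IsCompl (LinearMap.ker (T : H →ₗ[ℝ] K)) (LinearMap.range (Q : K →ₗ[ℝ] H)) :=
    LinearMap.isCompl_ker_range_of_bijective_comp <|
      ContinuousLinearMap.bijective_comp_of_norm_mul_norm_sub_lt_one hT₀Q (by linarith)
  obtain ⟨φ, hφ⟩ := Submodule.exists_linearEquiv_sub_mem_of_isCompl hT hT₀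
  refine ⟨φ, fun x => ?_⟩
  obtain ⟨y, hy⟩ := hφ x
  rw [← hy]
  exact hQrange y

/-- **Proposition (projection between kernels, "subbundle of kernels").**
Let `H`, `K` be Hilbert spaces and `T₀ : H → K` a bounded surjective linear map.  The
restriction of `T₀` to `(ker T₀)ᗮ` is a bounded bijection onto `K`; let `Q : K → H` be its
bounded inverse (characterized by `T₀ ∘ Q = id` and `range Q ⊆ (ker T₀)ᗮ`).  If `T : H → K`
is a bounded linear map with `‖Q‖ * ‖T - T₀‖ < 1/2`, then the orthogonal projection of `H`
onto `ker T₀` restricts to a linear isomorphism from `ker T` onto `ker T₀`.  (Here the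
isomorphism `φ` being a restriction of the orthogonal projection is expressed by
`x - φ x ∈ (ker T₀)ᗮ` for all `x ∈ ker T`.) -/
theorem orthogonalProjection_ker_isomorphism
    {H K : Type*}
    [NormedAddCommGroup H] [InnerProductSpace ℝ H] [CompleteSpace H]
    [NormedAddCommGroup K] [InnerProductSpace ℝ K] [CompleteSpace K]
    (T₀ : H →L[ℝ] K) (hsurj : Function.Surjective T₀)
    (Q : K →L[ℝ] H)
    (hQrange : ∀ y : K, Q y ∈ (LinearMap.ker (T₀ : H →ₗ[ℝ] K))ᗮ)
    (hT₀Q : T₀.comp Q = ContinuousLinearMap.id ℝ K)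
    (T : H →L[ℝ] K)
    (h : ‖Q‖ * ‖T - T₀‖ < 1 / 2) :
    ∃ φ : LinearMap.ker (T : H →ₗ[ℝ] K) ≃ₗ[ℝ] LinearMap.ker (T₀ : H →ₗ[ℝ] K),
      ∀ x : LinearMap.ker (T : H →ₗ[ℝ] K), (x : H) - (φ x : H) ∈ (LinearMap.ker (T₀ : H →ₗ[ℝ] K))ᗮ :=
  orthogonalProjection_ker_isomorphism_general T₀ Q hQrange hT₀Q T h
end

section
/- Let E′ and E″ be real vector spaces, let κ′_I, κ′_J, κ′_K be alternating 2-forms on E′ and κ″_I, κ″_J, κ″_K alternating 2-forms on E″, and let f : E′ → E″ be a linear isomorphism with f*κ″_I = κ′_J, f*κ″_J = κ′_I and f*κ″_K = −κ′_K. Set V′ = E′ × ℝ³ with coordinate 1-forms dα′, dθ′, ds′ on the ℝ³ factor (and all forms on E′ pulled back to V′), define V″ and dα″, dθ″, ds″ analogously, and let F : V′ → V″ be the linear map F(y, a, t, σ) = (f(y), t, a, −σ). Then F*(κ″_I ∧ dα″ + κ″_J ∧ dθ″ + κ″_K ∧ ds″ + dα″ ∧ dθ″ ∧ ds″) = κ′_I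 ∧ dα′ + κ′_J ∧ dθ′ + κ′_K ∧ ds′ + dα′ ∧ dθ′ ∧ ds′ as alternating 3-forms on V′. -/
open scoped TensorProduct

noncomputable section

/-- The wedge product of two real-valued alternating forms, defined via
`AlternatingMap.domCoprod` (the sum over shuffles with signs), followed by multiplication
`ℝ ⊗ ℝ → ℝ` and the reindexing `Fin m ⊕ Fin n ≃ Fin (m + n)`. -/
def wedge {M : Type*} [AddCommGroup M] [Module ℝ M] {m n : ℕ}
    (ω : M [⋀^Fin m]→ₗ[ℝ] ℝ) (η : M [⋀^Fin n]→ₗ[ℝ] ℝ) :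
    M [⋀^Fin (m + n)]→ₗ[ℝ] ℝ :=
  AlternatingMap.domDomCongr finSumFinEquiv
    ((TensorProduct.lid ℝ ℝ).toLinearMap.compAlternatingMap (ω.domCoprod η))

/-- A linear functional viewed as an alternating 1-form. -/
def oneForm {M : Type*} [AddCommGroup M] [Module ℝ M] (φ : M →ₗ[ℝ] ℝ) :
    M [⋀^Fin 1]→ₗ[ℝ] ℝ :=
  AlternatingMap.ofSubsingleton ℝ M ℝ (0 : Fin 1) φ

/-- The model space `V = E × ℝ³` (with `ℝ³` carrying the coordinates `α, θ, s`). -/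
abbrev V (E : Type*) [AddCommGroup E] [Module ℝ E] := E × ℝ × ℝ × ℝ

variable (E : Type*) [AddCommGroup E] [Module ℝ E]

/-- Projection `V E → E`. -/
def projE : V E →ₗ[ℝ] E := LinearMap.fst ℝ E (ℝ × ℝ × ℝ)

/-- The coordinate 1-form `dα` on `V E`. -/
def dAlpha : V E →ₗ[ℝ] ℝ :=
  (LinearMap.fst ℝ ℝ (ℝ × ℝ)).comp (LinearMap.snd ℝ E (ℝ × ℝ × ℝ))

/-- The coordinate 1-form `dθ` on `V E`. -/
def dTheta : V E →ₗ[ℝ] ℝ :=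
  ((LinearMap.fst ℝ ℝ ℝ).comp (LinearMap.snd ℝ ℝ (ℝ × ℝ))).comp
    (LinearMap.snd ℝ E (ℝ × ℝ × ℝ))

/-- The coordinate 1-form `ds` on `V E`. -/
def dS : V E →ₗ[ℝ] ℝ :=
  ((LinearMap.snd ℝ ℝ ℝ).comp (LinearMap.snd ℝ ℝ (ℝ × ℝ))).comp
    (LinearMap.snd ℝ E (ℝ × ℝ × ℝ))

variable {E}

/-- The asymptotic `G₂`-structure 3-form
`φ = κ_I ∧ dα + κ_J ∧ dθ + κ_K ∧ ds + dα ∧ dθ ∧ ds` on `V E = E × ℝ³`,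
where the 2-forms `κ_I, κ_J, κ_K` on `E` are pulled back to `V E` via the projection. -/
def g2Form (κI κJ κK : E [⋀^Fin 2]→ₗ[ℝ] ℝ) : (V E) [⋀^Fin 3]→ₗ[ℝ] ℝ :=
  (wedge (κI.compLinearMap (projE E)) (oneForm (dAlpha E)) :
      (V E) [⋀^Fin 3]→ₗ[ℝ] ℝ)
    + (wedge (κJ.compLinearMap (projE E)) (oneForm (dTheta E)) :
      (V E) [⋀^Fin 3]→ₗ[ℝ] ℝ)
    + (wedge (κK.compLinearMap (projE E)) (oneForm (dS E)) :
      (V E) [⋀^Fin 3]→ₗ[ℝ] ℝ)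
    + (wedge (wedge (oneForm (dAlpha E)) (oneForm (dTheta E))) (oneForm (dS E)) :
      (V E) [⋀^Fin 3]→ₗ[ℝ] ℝ)

/-! Pullback commutes with `∧` and with sums, and `F` acts on the building blocks by
`κ″ ↦ f*κ″`, `dα″ ↦ dθ′`, `dθ″ ↦ dα′`, `ds″ ↦ −ds′`.  So the first two terms of the `G₂`-form
are exchanged, the signs in `f*κ″_K ∧ (−ds′) = (−κ′_K) ∧ (−ds′)` cancel, and
`dθ′ ∧ dα′ ∧ (−ds′) = dα′ ∧ dθ′ ∧ ds′` because 1-forms anticommute. -/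

theorem AlternatingMap.neg_compLinearMap {R M M₂ N ι : Type*} [CommRing R] [AddCommGroup M]
    [Module R M] [AddCommGroup M₂] [Module R M₂] [AddCommGroup N] [Module R N]
    (ω : M [⋀^ι]→ₗ[R] N) (g : M₂ →ₗ[R] M) :
    (-ω).compLinearMap g = -ω.compLinearMap g :=
  rfl

theorem Equiv.Perm.ModSumCongr.mk_bijective_of_subsingleton {α β : Type*} [Subsingleton α]
    [Subsingleton β] :
    Function.Bijective (QuotientGroup.mk : Equiv.Perm (α ⊕ β) → Equiv.Perm.ModSumCongr α β) := by
  refine ⟨fun x y hxy => ?_, Quotient.mk''_surjective⟩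
  obtain ⟨p, hp⟩ := QuotientGroup.leftRel_apply.mp (Quotient.exact' hxy)
  rw [Subsingleton.elim p 1, map_one] at hp
  exact eq_of_inv_mul_eq_one hp.symm

section Wedge

variable {M M₂ : Type*} [AddCommGroup M] [Module ℝ M] [AddCommGroup M₂] [Module ℝ M₂]

def wedgeₗ (m n : ℕ) :
    (M [⋀^Fin m]→ₗ[ℝ] ℝ) →ₗ[ℝ] (M [⋀^Fin n]→ₗ[ℝ] ℝ) →ₗ[ℝ] M [⋀^Fin (m + n)]→ₗ[ℝ] ℝ :=
  (TensorProduct.mk ℝ _ _).compr₂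
    ((AlternatingMap.domDomCongrₗ ℝ finSumFinEquiv).toLinearMap ∘ₗ
      LinearMap.compAlternatingMapₗ ℝ (TensorProduct.lid ℝ ℝ).toLinearMap ∘ₗ
      AlternatingMap.domCoprod')

theorem wedgeₗ_apply {m n : ℕ} (ω : M [⋀^Fin m]→ₗ[ℝ] ℝ) (η : M [⋀^Fin n]→ₗ[ℝ] ℝ) :
    wedgeₗ m n ω η = wedge ω η :=
  rfl

theorem wedge_neg_left {m n : ℕ} (ω : M [⋀^Fin m]→ₗ[ℝ] ℝ) (η : M [⋀^Fin n]→ₗ[ℝ] ℝ) :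
    wedge (-ω) η = -wedge ω η := by
  simp only [← wedgeₗ_apply, map_neg, LinearMap.neg_apply]

theorem wedge_neg_right {m n : ℕ} (ω : M [⋀^Fin m]→ₗ[ℝ] ℝ) (η : M [⋀^Fin n]→ₗ[ℝ] ℝ) :
    wedge ω (-η) = -wedge ω η := by
  simp only [← wedgeₗ_apply, map_neg]

theorem wedge_compLinearMap {m n : ℕ} (ω : M [⋀^Fin m]→ₗ[ℝ] ℝ) (η : M [⋀^Fin n]→ₗ[ℝ] ℝ)
    (g : M₂ →ₗ[ℝ] M) :
    (wedge ω η).compLinearMap g = wedge (ω.compLinearMap g) (η.compLinearMap g) := by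
  ext v
  simp only [wedge, AlternatingMap.compLinearMap_apply, AlternatingMap.domDomCongr_apply,
    LinearMap.compAlternatingMap_apply, AlternatingMap.domCoprod_apply, _root_.sum_apply]
  congr 1
  refine Finset.sum_congr rfl fun σ _ => ?_
  induction σ using Quotient.inductionOn' with
  | h σ => simp [AlternatingMap.domCoprod.summand, MultilinearMap.domCoprod]

theorem oneForm_neg (φ : M →ₗ[ℝ] ℝ) : oneForm (-φ) = -oneForm φ := by
  ext v
  simp [oneForm]

theorem oneForm_compLinearMap (φ : M →ₗ[ℝ] ℝ) (g : M₂ →ₗ[ℝ] M) :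
    (oneForm φ).compLinearMap g = oneForm (φ ∘ₗ g) := by
  ext v
  simp [oneForm]

theorem wedge_oneForm_apply (a b : M →ₗ[ℝ] ℝ) (v : Fin 2 → M) :
    wedge (oneForm a) (oneForm b) v = a (v 0) * b (v 1) - a (v 1) * b (v 0) := by
  simp only [wedge, AlternatingMap.domDomCongr_apply, LinearMap.compAlternatingMap_apply,
    AlternatingMap.domCoprod_apply]
  rw [← Equiv.sum_comp (Equiv.ofBijective _ Equiv.Perm.ModSumCongr.mk_bijective_of_subsingleton)]
  have huniv : (Finset.univ : Finset (Equiv.Perm (Fin 1 ⊕ Fin 1))) =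
      {1, Equiv.swap (Sum.inl 0) (Sum.inr 0)} := by decide
  rw [huniv, Finset.sum_insert (by decide), Finset.sum_singleton]
  have h0 : finSumFinEquiv (Sum.inl (0 : Fin 1)) = (0 : Fin (1 + 1)) := rfl
  have h1 : finSumFinEquiv (Sum.inr (0 : Fin 1)) = (1 : Fin (1 + 1)) := rfl
  simp [AlternatingMap.domCoprod.summand, MultilinearMap.domCoprod_apply, oneForm,
    Units.smul_def, h0, h1]
  ring

theorem wedge_oneForm_comm (a b : M →ₗ[ℝ] ℝ) :
    wedge (oneForm a) (oneForm b) = -wedge (oneForm b) (oneForm a) := by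
  ext v
  rw [AlternatingMap.neg_apply, wedge_oneForm_apply, wedge_oneForm_apply]
  ring

end Wedge

/-- **The hyper-Kähler matching makes the `G₂`-structures agree on the gluing region.**
Let `f : E′ → E″` be a linear isomorphism with `f*κ″_I = κ′_J`, `f*κ″_J = κ′_I`,
`f*κ″_K = −κ′_K`, and let `F : V′ → V″`, `F(y, a, t, σ) = (f y, t, a, −σ)`.  Then
`F*(κ″_I ∧ dα″ + κ″_J ∧ dθ″ + κ″_K ∧ ds″ + dα″ ∧ dθ″ ∧ ds″)
   = κ′_I ∧ dα′ + κ′_J ∧ dθ′ + κ′_K ∧ ds′ + dα′ ∧ dθ′ ∧ ds′`. -/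
theorem g2Form_pullback_eq
    {E' E'' : Type*} [AddCommGroup E'] [Module ℝ E'] [AddCommGroup E''] [Module ℝ E'']
    (κI' κJ' κK' : E' [⋀^Fin 2]→ₗ[ℝ] ℝ) (κI'' κJ'' κK'' : E'' [⋀^Fin 2]→ₗ[ℝ] ℝ)
    (f : E' ≃ₗ[ℝ] E'')
    (hI : κI''.compLinearMap (f : E' →ₗ[ℝ] E'') = κJ')
    (hJ : κJ''.compLinearMap (f : E' →ₗ[ℝ] E'') = κI')
    (hK : κK''.compLinearMap (f : E' →ₗ[ℝ] E'') = -κK')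
    (F : V E' →ₗ[ℝ] V E'')
    (hF : ∀ v : V E', F v = (f v.1, v.2.2.1, v.2.1, -v.2.2.2)) :
    (g2Form κI'' κJ'' κK'').compLinearMap F = g2Form κI' κJ' κK' := by
  have hproj : projE E'' ∘ₗ F = (f : E' →ₗ[ℝ] E'') ∘ₗ projE E' := by
    ext v <;> simp [projE, hF]
  have hdAlpha : dAlpha E'' ∘ₗ F = dTheta E' := by
    ext v <;> simp [dAlpha, dTheta, hF]
  have hdTheta : dTheta E'' ∘ₗ F = dAlpha E' := by
    ext v <;> simp [dAlpha, dTheta, hF]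
  have hdS : dS E'' ∘ₗ F = -dS E' := by
    ext v <;> simp [dS, hF]
  have hκ (κ : E'' [⋀^Fin 2]→ₗ[ℝ] ℝ) : (κ.compLinearMap (projE E'')).compLinearMap F =
      (κ.compLinearMap (f : E' →ₗ[ℝ] E'')).compLinearMap (projE E') := by
    rw [AlternatingMap.compLinearMap_assoc, hproj, AlternatingMap.compLinearMap_assoc]
  rw [g2Form, g2Form]
  simp only [AlternatingMap.add_compLinearMap]
  rw [wedge_compLinearMap, wedge_compLinearMap, wedge_compLinearMap, wedge_compLinearMap,
    wedge_compLinearMap]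
  simp only [hκ, hI, hJ, hK, oneForm_compLinearMap, hdAlpha, hdTheta, hdS, oneForm_neg,
    AlternatingMap.neg_compLinearMap, wedge_neg_left, wedge_neg_right, neg_neg,
    wedge_oneForm_comm (dTheta E')]
  abel
end
end
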